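/- arXiv:2405.06519 — 3 statements merged into one kernel-verified Lean document; each statement's English description precedes it below -/
import Mathlib

section
/- If Y is a Hausdorff space and B is a basis for the topology on Y consisting of compact open sets, then the smallest ring of sets containing B is exactly the collection of all compact open subsets of Y (equivalently, every compact open subset of Y is a finite union of basis elements). -/
/-!
A compact open set is covered by the basis sets it contains, hence is a finite union of them,
so it lies in every ring of sets containing the basis. Conversely, in a Hausdorff space compact
sets are closed, so `K \ L = K ∩ Lᶜ` is compact and open for compact open `K`, `L`: the compact
open sets themselves form a ring of sets.
-/

open MeasureTheory TopologicalSpace Set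

theorem isSetRing_setOf_isCompact_isOpen (Y : Type*) [TopologicalSpace Y] [T2Space Y] :
    IsSetRing {A : Set Y | IsCompact A ∧ IsOpen A} where
  empty_mem := ⟨isCompact_empty, isOpen_empty⟩
  union_mem _ _ hs ht := ⟨hs.1.union ht.1, hs.2.union ht.2⟩
  sdiff_mem _ _ hs ht := ⟨hs.1.diff ht.2, hs.2.sdiff ht.1.isClosed⟩

theorem MeasureTheory.IsSetRing.mem_of_isCompact_of_isOpen {Y : Type*} [TopologicalSpace Y]
    {B R : Set (Set Y)} (hR : IsSetRing R) (hbasis : IsTopologicalBasis B) (hBR : B ⊆ R)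
    {A : Set Y} (hAc : IsCompact A) (hAo : IsOpen A) : A ∈ R := by
  rw [← Subtype.range_coe (s := B)] at hbasis
  obtain ⟨S, hS, rfl⟩ :=
    eq_finite_iUnion_of_isTopologicalBasis_of_isCompact_open _ hbasis A hAc hAo
  simpa using hR.biUnion_mem hS.toFinset fun b _ => hBR b.2

/-- If `Y` is Hausdorff and `B` is a basis for the topology consisting of compact open sets,
then the smallest ring of sets containing `B` is exactly the collection of all compact open
subsets of `Y`. -/
theorem stmt_1 (Y : Type*) [TopologicalSpace Y] [T2Space Y] (B : Set (Set Y))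
    (hB : ∀ A ∈ B, IsCompact A ∧ IsOpen A)
    (hbasis : TopologicalSpace.IsTopologicalBasis B) :
    ⋂₀ {R : Set (Set Y) | MeasureTheory.IsSetRing R ∧ B ⊆ R} =
      {A : Set Y | IsCompact A ∧ IsOpen A} :=
  le_antisymm (sInter_subset_of_mem ⟨isSetRing_setOf_isCompact_isOpen Y, hB⟩)
    (subset_sInter fun _ ⟨hR, hBR⟩ _ ⟨hAc, hAo⟩ =>
      hR.mem_of_isCompact_of_isOpen hbasis hBR hAc hAo)
end

section
/- Let Y be the set of places of the algebraic closure of ℚ, with basic sets Y(K,v) = {y ∈ Y : y | v} for number fields K and places v of K. If two finite pairwise-disjoint families {V_1,...,V_m} and {W_1,...,W_n} of basic sets have equal unions, and c is a consistent map, then Σ_{i=1}^m c(V_i) = Σ_{j=1}^n c(W_j). -/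
/-- Abstract axiomatization of the space `Y` of all places of `\overline{ℚ}`: a directed
system `F` of number fields (ordered by field extension `le`), the places `Pl K` of each
number field, the map `over` sending a place `w` of `L` to the place of `K` it divides, and
the basic compact open sets `Y(K,v) = {y ∈ Y : y ∣ v}` forming a basis of the totally
disconnected Hausdorff topology on `Y`. -/
structure PlaceSystem where
  /-- the number fields -/
  F : Type
  /-- `le K L` means `L/K` is a (finite) field extension -/
  le : F → F → Prop
  le_refl : ∀ K, le K K
  /-- any two number fields admit a compositum -/
  directed : ∀ K L, ∃ M, le K M ∧ le L M
  /-- the places of a number field -/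
  Pl : F → Type
  /-- `over h w` is the unique place of `K` divided by the place `w` of `L` -/
  overPlace : ∀ {K L : F}, le K L → Pl L → Pl K
  /-- only finitely many places of `L` divide a given place of `K` -/
  finiteFibers : ∀ {K L : F} (h : le K L) (v : Pl K), {w : Pl L | overPlace h w = v}.Finite
  /-- the set of places of `\overline{ℚ}` -/
  Y : Type
  top : TopologicalSpace Y
  t2 : @T2Space Y top
  /-- the basic set `Y(K,v)` of places of `\overline{ℚ}` dividing `v` -/
  Yset : (K : F) → Pl K → Set Y
  Yset_nonempty : ∀ (K : F) (v : Pl K), (Yset K v).Nonempty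
  Yset_compact : ∀ (K : F) (v : Pl K), @IsCompact Y top (Yset K v)
  Yset_open : ∀ (K : F) (v : Pl K), @IsOpen Y top (Yset K v)
  Yset_disjoint : ∀ (K : F) (v w : Pl K), v ≠ w → Disjoint (Yset K v) (Yset K w)
  /-- `Y(K,v)` is the disjoint union of the `Y(L,w)` over the places `w ∣ v` of `L` -/
  Yset_decomp : ∀ {K L : F} (h : le K L) (v : Pl K),
    Yset K v = ⋃ w ∈ {w : Pl L | overPlace h w = v}, Yset L w
  basis : @TopologicalSpace.IsTopologicalBasis Y top
    {A : Set Y | ∃ (K : F) (v : Pl K), A = Yset K v}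
  cover : (⋃ (K : F) (v : Pl K), Yset K v) = Set.univ
  noncompact : ¬ @IsCompact Y top Set.univ

/-- A map `c` on pairs `(K,v)` is consistent if `c(K,v) = Σ_{w ∣ v} c(L,w)` for every finite
extension `L/K`. -/
def PlaceSystem.Consistent (S : PlaceSystem) (c : ∀ K : S.F, S.Pl K → ℝ) : Prop :=
  ∀ {K L : S.F} (h : S.le K L) (v : S.Pl K),
    c K v = ∑ᶠ (w : S.Pl L) (_ : S.overPlace h w = v), c L w

/-- `R`, the smallest ring of sets on `Y` containing all the basic sets `Y(K,v)`. -/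
def PlaceSystem.ringR (S : PlaceSystem) : Set (Set S.Y) :=
  ⋂₀ {R : Set (Set S.Y) |
    MeasureTheory.IsSetRing R ∧ ∀ (K : S.F) (v : S.Pl K), S.Yset K v ∈ R}

/-- A charge on `R`: a finitely additive real-valued set function vanishing on `∅`. -/
def PlaceSystem.IsCharge (S : PlaceSystem) (μ : Set S.Y → ℝ) : Prop :=
  μ ∅ = 0 ∧ ∀ A ∈ S.ringR, ∀ B ∈ S.ringR, Disjoint A B → μ (A ∪ B) = μ A + μ B


/-! Choose a number field `M` containing all the fields occurring in the two families; it
exists because the number fields are directed. Iterating consistency along a chain of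
extensions refines every `Y(K,v)` into a finite disjoint union of sets `Y(M,w)` whose
`c`-values sum to `c(K,v)`. Since the sets `Y(M,w)` are nonempty and pairwise disjoint, a
union of them determines the set of places `w` involved, so both families refine to the same
finite set of places of `M`, and both sums equal the sum of `c(M,w)` over it. -/

open Relation

namespace PlaceSystem

variable (S : PlaceSystem)

theorem nonempty_F : Nonempty S.F := by
  let _ := S.top
  by_contra hF
  rw [not_nonempty_iff] at hF
  have hY : (Set.univ : Set S.Y) = ∅ := by simp [← S.cover]
  exact S.noncompact (hY ▸ isCompact_empty)

theorem exists_common_extension {ι : Type*} [Finite ι] (f : ι → S.F) :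
    ∃ M, ∀ i, ReflTransGen S.le (f i) M := by
  classical
  have := S.nonempty_F
  have hdir : Directed (ReflTransGen S.le) id := fun K L =>
    let ⟨M, hKM, hLM⟩ := S.directed K L
    ⟨M, .single hKM, .single hLM⟩
  have := Fintype.ofFinite ι
  obtain ⟨M, hM⟩ := hdir.finset_le (Finset.univ.image f)
  exact ⟨M, fun i => hM (f i) (Finset.mem_image_of_mem f (Finset.mem_univ i))⟩

theorem mem_iff_Yset_subset_biUnion {M : S.F} (T : Finset (S.Pl M)) (w : S.Pl M) :
    w ∈ T ↔ S.Yset M w ⊆ ⋃ u ∈ T, S.Yset M u := by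
  refine ⟨fun hw => Set.subset_biUnion_of_mem (u := fun u => S.Yset M u) hw, fun hsub => ?_⟩
  obtain ⟨y, hy⟩ := S.Yset_nonempty M w
  obtain ⟨u, hu, hyu⟩ := Set.mem_iUnion₂.mp (hsub hy)
  by_contra hwT
  have hne : w ≠ u := fun h => hwT (h ▸ hu)
  exact Set.disjoint_left.mp (S.Yset_disjoint M w u hne) hy hyu

theorem biUnion_Yset_injective (M : S.F) :
    Function.Injective fun T : Finset (S.Pl M) => ⋃ u ∈ T, S.Yset M u := by
  intro T T' h
  ext w
  simp only at h
  rw [S.mem_iff_Yset_subset_biUnion, S.mem_iff_Yset_subset_biUnion, h]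

theorem disjoint_of_disjoint_biUnion_Yset {M : S.F} {T T' : Finset (S.Pl M)}
    (h : Disjoint (⋃ u ∈ T, S.Yset M u) (⋃ u ∈ T', S.Yset M u)) : Disjoint T T' := by
  rw [Finset.disjoint_left]
  intro w hw hw'
  obtain ⟨y, hy⟩ := S.Yset_nonempty M w
  exact Set.disjoint_left.mp h (Set.mem_biUnion hw hy) (Set.mem_biUnion hw' hy)

variable {S}

theorem Consistent.exists_refinement {c : ∀ K : S.F, S.Pl K → ℝ} (hc : S.Consistent c)
    {K M : S.F} (hKM : ReflTransGen S.le K M) (v : S.Pl K) :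
    ∃ T : Finset (S.Pl M), S.Yset K v = ⋃ w ∈ T, S.Yset M w ∧ c K v = ∑ w ∈ T, c M w := by
  classical
  induction hKM with
  | refl => exact ⟨{v}, by simp, by simp⟩
  | @tail L M _ hLM ih =>
    obtain ⟨T, hTY, hTc⟩ := ih
    let fiber (u : S.Pl L) : Finset (S.Pl M) := (S.finiteFibers hLM u).toFinset
    have hfiber (u : S.Pl L) : {w | S.overPlace hLM w = u} = ↑(fiber u) := by simp [fiber]
    refine ⟨T.biUnion fiber, ?_, ?_⟩
    · rw [Finset.set_biUnion_biUnion, hTY]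
      refine Set.iUnion₂_congr fun u _ => ?_
      rw [S.Yset_decomp hLM u, hfiber u, Finset.set_biUnion_coe]
    · have hdisj : (T : Set (S.Pl L)).PairwiseDisjoint fiber := fun u _ u' _ hne =>
        Finset.disjoint_left.mpr fun w hw hw' => hne <| by
          simp only [fiber, Set.Finite.mem_toFinset, Set.mem_ofPred_eq] at hw hw'
          rw [← hw, hw']
      rw [hTc, Finset.sum_biUnion hdisj]
      refine Finset.sum_congr rfl fun u _ => ?_
      rw [hc hLM u, ← finsum_mem_coe_finset, ← hfiber u]
      rfl

theorem sum_eq_sum_biUnion_of_refinement {ι : Type*} [Fintype ι]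
    {c : ∀ K : S.F, S.Pl K → ℝ} {M : S.F} [DecidableEq (S.Pl M)] {V : ι → (K : S.F) × S.Pl K}
    (hVd : Pairwise (Function.onFun Disjoint fun i => S.Yset (V i).1 (V i).2))
    {T : ι → Finset (S.Pl M)} (hTY : ∀ i, S.Yset (V i).1 (V i).2 = ⋃ w ∈ T i, S.Yset M w)
    (hTc : ∀ i, c (V i).1 (V i).2 = ∑ w ∈ T i, c M w) :
    ∑ i, c (V i).1 (V i).2 = ∑ w ∈ Finset.univ.biUnion T, c M w := by
  have hTd : Set.PairwiseDisjoint ↑(Finset.univ : Finset ι) T := fun i _ j _ hij =>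
    S.disjoint_of_disjoint_biUnion_Yset (by rw [← hTY i, ← hTY j]; exact hVd hij)
  rw [Finset.sum_biUnion hTd]
  exact Finset.sum_congr rfl fun i _ => hTc i

end PlaceSystem

/-- If two finite pairwise-disjoint families of basic sets `Y(K,v)` have equal unions and
`c` is a consistent map, then the corresponding sums of values of `c` are equal. -/
theorem stmt_6 (S : PlaceSystem) (c : ∀ K : S.F, S.Pl K → ℝ) (hc : S.Consistent c)
    (m n : ℕ) (V : Fin m → (K : S.F) × S.Pl K) (W : Fin n → (K : S.F) × S.Pl K)
    (hVd : Pairwise (Function.onFun Disjoint fun i => S.Yset (V i).1 (V i).2))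
    (hWd : Pairwise (Function.onFun Disjoint fun j => S.Yset (W j).1 (W j).2))
    (hUnion : (⋃ i, S.Yset (V i).1 (V i).2) = ⋃ j, S.Yset (W j).1 (W j).2) :
    ∑ i, c (V i).1 (V i).2 = ∑ j, c (W j).1 (W j).2 := by
  classical
  obtain ⟨M, hM⟩ := S.exists_common_extension (Sum.elim (fun i => (V i).1) fun j => (W j).1)
  choose T hTY hTc using fun i => hc.exists_refinement (hM (.inl i)) (V i).2
  choose U hUY hUc using fun j => hc.exists_refinement (hM (.inr j)) (W j).2
  have hTU : Finset.univ.biUnion T = Finset.univ.biUnion U := by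
    apply S.biUnion_Yset_injective M
    simp only [Finset.set_biUnion_biUnion, Finset.mem_univ, Set.iUnion_true, ← hTY, ← hUY]
    exact hUnion
  rw [PlaceSystem.sum_eq_sum_biUnion_of_refinement hVd hTY hTc,
    PlaceSystem.sum_eq_sum_biUnion_of_refinement hWd hUY hUc, hTU]
end

section
/- Let Γ and Δ be countable partitions of an open set U into nonempty pairwise disjoint compact open sets, with Γ refining Δ, and let μ be a finitely additive real-valued set function on the ring of compact open sets. If Σ_{A∈Γ} μ(A) converges unconditionally to x ∈ [-∞,∞], then Σ_{B∈Δ} μ(B) also converges unconditionally to x. -/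
/-- Unconditional convergence of a countable sum of reals to a value in `[-∞,∞]`:
every enumeration of the terms has partial sums tending to `L` in `EReal`. -/
def UncondSumRE (x : ℕ → ℝ) (L : EReal) : Prop :=
  ∀ σ : Equiv.Perm ℕ,
    Filter.Tendsto (fun n : ℕ => ((∑ k ∈ Finset.range n, x (σ k) : ℝ) : EReal))
      Filter.atTop (nhds L)

/-!
Every nonempty cell of `Γ` lies in exactly one cell of `Δ`, and by compactness each cell of `Δ`
is the disjoint union of the finitely many cells of `Γ` meeting it. By finite additivity the
`Δ`-series is therefore the `Γ`-series grouped into finite blocks, up to empty cells, which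
contribute `0`. Given an enumeration `τ` of the blocks, list the indices of `Γ` block by block in
the order of `τ`: the partial sums of the grouped series along `τ` form a subsequence of the
partial sums of this rearrangement of the `Γ`-series, which tend to `x`.
-/

open Finset Function Filter Topology

section Rank

variable {α : Type*} [LinearOrder α] {f : ℕ → α}

/-- The position of `i` when `ℕ` is listed in increasing order of `f`. -/
noncomputable def rankBy (f : ℕ → α) (i : ℕ) : ℕ := {j | f j < f i}.ncard

lemma rankBy_lt_rankBy {i j : ℕ} (hij : f i < f j) (hfin : {k | f k < f j}.Finite) :
    rankBy f i < rankBy f j :=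
  Set.ncard_lt_ncard ((Set.ssubset_iff_of_subset fun _ hk => lt_trans hk hij).2
    ⟨i, hij, lt_irrefl _⟩) hfin

lemma image_rankBy_eq_range (hf : Injective f) {s : Finset ℕ}
    (hs : ∀ i ∈ s, ∀ j, f j ≤ f i → j ∈ s) : s.image (rankBy f) = range #s := by
  have hlt : ∀ i ∈ s, {j | f j < f i} ⊂ ↑s := fun i hi =>
    (Set.ssubset_iff_of_subset fun j hj => hs i hi j (le_of_lt hj)).2 ⟨i, hi, lt_irrefl _⟩
  have hinj : Set.InjOn (rankBy f) s := by
    intro i hi j hj hij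
    by_contra hne
    rcases lt_or_gt_of_ne (hf.ne hne) with h | h
    · exact (rankBy_lt_rankBy h (s.finite_toSet.subset (hlt j hj).subset)).ne hij
    · exact (rankBy_lt_rankBy h (s.finite_toSet.subset (hlt i hi).subset)).ne' hij
  refine eq_of_subset_of_card_le (fun r hr => ?_) (by rw [card_range, card_image_of_injOn hinj])
  obtain ⟨i, hi, rfl⟩ := mem_image.1 hr
  rw [mem_range, rankBy, ← Set.ncard_coe_finset s]
  exact Set.ncard_lt_ncard (hlt i hi)

lemma bijective_rankBy (hf : Injective f) (hfin : ∀ i, {j | f j < f i}.Finite) :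
    Bijective (rankBy f) := by
  have hIic : ∀ i, {j | f j ≤ f i}.Finite := fun i =>
    ((hfin i).insert i).subset fun j hj => (eq_or_lt_of_le hj).imp (fun h => hf h) id
  refine ⟨fun i j hij => ?_, fun n => ?_⟩
  · by_contra hne
    rcases lt_or_gt_of_ne (hf.ne hne) with h | h
    · exact (rankBy_lt_rankBy h (hfin j)).ne hij
    · exact (rankBy_lt_rankBy h (hfin i)).ne' hij
  · obtain ⟨i, -, hi⟩ := (range (n + 1)).exists_max_image f nonempty_range_add_one
    set s := (hIic i).toFinset
    have hs : ∀ k ∈ s, ∀ j, f j ≤ f k → j ∈ s := fun k hk j hjk => by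
      simp only [s, Set.Finite.mem_toFinset, Set.mem_ofPred_eq] at hk ⊢
      exact hjk.trans hk
    have hn : n < #s := by
      simpa using card_le_card (fun k hk => by simpa [s] using hi k hk : range (n + 1) ⊆ s)
    obtain ⟨j, -, hj⟩ := mem_image.1 ((image_rankBy_eq_range hf hs).symm ▸ mem_range.2 hn)
    exact ⟨j, hj⟩

lemma exists_perm_image_range_eq (hf : Injective f) (hfin : ∀ i, {j | f j < f i}.Finite) :
    ∃ σ : Equiv.Perm ℕ, ∀ s : Finset ℕ, (∀ i ∈ s, ∀ j, f j ≤ f i → j ∈ s) →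
      (range #s).image σ = s := by
  refine ⟨(Equiv.ofBijective _ (bijective_rankBy hf hfin)).symm, fun s hs => ?_⟩
  rw [← image_rankBy_eq_range hf hs, image_image]
  simp [comp_def]

end Rank

lemma exists_perm_image_range_card_eq {F : ℕ → Finset ℕ} (hF : Monotone F)
    (hcover : ∀ i, ∃ n, i ∈ F n) :
    ∃ σ : Equiv.Perm ℕ, ∀ n, (range #(F n)).image σ = F n := by
  classical
  set key : ℕ → ℕ := fun i => Nat.find (hcover i)
  have hmem : ∀ i n, i ∈ F n ↔ key i ≤ n := fun i n =>
    ⟨fun h => Nat.find_min' _ h, fun h => hF h (Nat.find_spec (hcover i))⟩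
  set f : ℕ → ℕ ×ₗ ℕ := fun i => toLex (key i, i)
  have hf : Injective f := fun i j h => congrArg (fun p => (ofLex p).2) h
  have hkey : ∀ {i j}, f j ≤ f i → key j ≤ key i := fun h =>
    (Prod.Lex.toLex_le_toLex.1 h).elim le_of_lt fun h => h.1.le
  obtain ⟨σ, hσ⟩ := exists_perm_image_range_eq hf fun i =>
    (F (key i)).finite_toSet.subset fun j hj => (hmem j _).2 (hkey (le_of_lt hj))
  exact ⟨σ, fun n => hσ (F n) fun i hi j hji => (hmem j n).2 ((hkey hji).trans ((hmem i n).1 hi))⟩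

namespace UncondSumRE

variable {x : ℕ → ℝ} {L : EReal}

lemma tendsto_sum_of_monotone (hx : UncondSumRE x L) {F : ℕ → Finset ℕ} (hF : Monotone F)
    (hcover : ∀ i, ∃ n, i ∈ F n) :
    Tendsto (fun n => ((∑ i ∈ F n, x i : ℝ) : EReal)) atTop (𝓝 L) := by
  obtain ⟨σ, hσ⟩ := exists_perm_image_range_card_eq hF hcover
  have hcard : Tendsto (fun n => #(F n)) atTop atTop := by
    refine tendsto_atTop.2 fun N => ?_
    have hrange : ∀ᶠ n in atTop, ∀ i ∈ range N, i ∈ F n :=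
      (eventually_all_finset _).2 fun i _ =>
        let ⟨n, hn⟩ := hcover i
        eventually_atTop.2 ⟨n, fun _ hm => hF hm hn⟩
    filter_upwards [hrange] with n hn
    simpa using card_le_card hn
  refine ((hx σ).comp hcard).congr fun n => ?_
  rw [comp_apply, ← sum_image σ.injective.injOn, hσ n]

lemma sum_blocks (hx : UncondSumRE x L) (G : ℕ → Finset ℕ) (hG : Pairwise (Disjoint on G))
    (hcover : ∀ i, x i ≠ 0 → ∃ j, i ∈ G j) :
    UncondSumRE (fun j => ∑ i ∈ G j, x i) L := by
  classical
  intro τ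
  set F : ℕ → Finset ℕ := fun n =>
    (range n).biUnion (fun k => G (τ k)) ∪ (range n).filter fun i => ∀ j, i ∉ G j
  have hF : Monotone F := fun m n hmn =>
    union_subset_union (biUnion_subset_biUnion_of_subset_left _ (range_subset_range.2 hmn))
      (filter_subset_filter _ (range_subset_range.2 hmn))
  have hFcover : ∀ i, ∃ n, i ∈ F n := by
    intro i
    by_cases hi : ∃ j, i ∈ G j
    · obtain ⟨j, hj⟩ := hi
      exact ⟨τ.symm j + 1, mem_union_left _ (mem_biUnion.2 ⟨τ.symm j, by simp, by simpa⟩)⟩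
    · exact ⟨i + 1, mem_union_right _ (mem_filter.2 ⟨by simp, not_exists.1 hi⟩)⟩
  refine (hx.tendsto_sum_of_monotone hF hFcover).congr fun n => ?_
  rw [sum_union, sum_biUnion, sum_eq_zero (s := filter _ _), add_zero]
  · intro i hi
    by_contra hxi
    obtain ⟨j, hj⟩ := hcover i hxi
    exact (mem_filter.1 hi).2 j hj
  · exact fun k _ l _ hkl => hG (τ.injective.ne hkl)
  · refine disjoint_left.2 fun i hi hi' => ?_
    obtain ⟨k, -, hk⟩ := mem_biUnion.1 hi
    exact (mem_filter.1 hi').2 _ hk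

end UncondSumRE

lemma IsCompact.finite_setOf_inter_nonempty {X ι : Type*} [TopologicalSpace X] {K : Set X}
    {C : ι → Set X} (hK : IsCompact K) (hC : ∀ i, IsOpen (C i)) (hd : Pairwise (Disjoint on C))
    (hKC : K ⊆ ⋃ i, C i) : {i | (C i ∩ K).Nonempty}.Finite := by
  obtain ⟨t, ht⟩ := hK.elim_finite_subcover C hC hKC
  refine t.finite_toSet.subset ?_
  rintro i ⟨y, hyi, hyK⟩
  obtain ⟨i', hi', hyi'⟩ := Set.mem_iUnion₂.1 (ht hyK)
  obtain rfl : i = i' := hd.eq (Set.not_disjoint_iff.2 ⟨y, hyi, hyi'⟩)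
  exact hi'

section Additive

variable {Y ι : Type*} [TopologicalSpace Y] (μ : Set Y → ℝ)

lemma measure_biUnion_finset_of_additive (h0 : μ ∅ = 0)
    (hadd : ∀ A B : Set Y, IsCompact A → IsOpen A → IsCompact B → IsOpen B →
      Disjoint A B → μ (A ∪ B) = μ A + μ B)
    {C : ι → Set Y} (hC : ∀ i, IsCompact (C i) ∧ IsOpen (C i)) (hd : Pairwise (Disjoint on C))
    (s : Finset ι) : μ (⋃ i ∈ s, C i) = ∑ i ∈ s, μ (C i) := by
  classical
  induction s using Finset.induction with
  | empty => simpa using h0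
  | @insert a s ha ih =>
    rw [set_biUnion_insert, sum_insert ha, ← ih, hadd _ _ (hC a).1 (hC a).2
      (s.isCompact_biUnion fun i _ => (hC i).1) (isOpen_biUnion fun i _ => (hC i).2)]
    exact Set.disjoint_iUnion₂_right.2 fun i hi => hd fun h => ha (h ▸ hi)

end Additive

section Refinement

variable {Y : Type*} {Γ Δ : ℕ → Set Y}

lemma subset_of_inter_nonempty (hΓd : Pairwise (Disjoint on Γ))
    (href : ∀ j, Δ j = ⋃ i ∈ {i : ℕ | Γ i ⊆ Δ j}, Γ i) {i j : ℕ}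
    (h : (Γ i ∩ Δ j).Nonempty) : Γ i ⊆ Δ j := by
  obtain ⟨y, hyi, hyj⟩ := h
  rw [href j] at hyj
  obtain ⟨i', hi', hyi'⟩ := Set.mem_iUnion₂.1 hyj
  obtain rfl : i = i' := hΓd.eq (Set.not_disjoint_iff.2 ⟨y, hyi, hyi'⟩)
  exact hi'

lemma eq_biUnion_inter_nonempty (hΓd : Pairwise (Disjoint on Γ))
    (href : ∀ j, Δ j = ⋃ i ∈ {i : ℕ | Γ i ⊆ Δ j}, Γ i) (j : ℕ) :
    Δ j = ⋃ i ∈ {i | (Γ i ∩ Δ j).Nonempty}, Γ i := by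
  refine subset_antisymm (fun y hy => ?_)
    (Set.iUnion₂_subset fun i hi => subset_of_inter_nonempty hΓd href hi)
  obtain ⟨i, -, hyi⟩ := Set.mem_iUnion₂.1 ((href j).subset hy)
  exact Set.mem_iUnion₂.2 ⟨i, ⟨y, hyi, hy⟩, hyi⟩

end Refinement

theorem stmt_11_general (Y : Type*) [TopologicalSpace Y]
    (μ : Set Y → ℝ) (h0 : μ ∅ = 0)
    (hadd : ∀ A B : Set Y, IsCompact A → IsOpen A → IsCompact B → IsOpen B →
      Disjoint A B → μ (A ∪ B) = μ A + μ B)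
    (U : Set Y)
    (Γ Δ : ℕ → Set Y)
    (hΓco : ∀ i, IsCompact (Γ i) ∧ IsOpen (Γ i))
    (hΔco : ∀ j, IsCompact (Δ j) ∧ IsOpen (Δ j))
    (hΓd : Pairwise (Function.onFun Disjoint Γ))
    (hΔd : Pairwise (Function.onFun Disjoint Δ))
    (hΓU : (⋃ i, Γ i) = U) (hΔU : (⋃ j, Δ j) = U)
    (href : ∀ j, Δ j = ⋃ i ∈ {i : ℕ | Γ i ⊆ Δ j}, Γ i)
    (x : EReal) (hx : UncondSumRE (fun i => μ (Γ i)) x) :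
    UncondSumRE (fun j => μ (Δ j)) x := by
  have hfin : ∀ j, {i | (Γ i ∩ Δ j).Nonempty}.Finite := fun j =>
    (hΔco j).1.finite_setOf_inter_nonempty (fun i => (hΓco i).2) hΓd
      (hΓU ▸ hΔU ▸ Set.subset_iUnion Δ j)
  have hμ : (fun j => μ (Δ j)) = fun j => ∑ i ∈ (hfin j).toFinset, μ (Γ i) := by
    ext j
    rw [← measure_biUnion_finset_of_additive μ h0 hadd hΓco hΓd]
    congr 1
    simpa only [Set.Finite.mem_toFinset] using eq_biUnion_inter_nonempty hΓd href j
  rw [hμ]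
  refine hx.sum_blocks _ (fun j j' hjj' => disjoint_left.2 fun i hi hi' => ?_) fun i hi => ?_
  · simp only [Set.Finite.mem_toFinset, Set.mem_ofPred_eq] at hi hi'
    obtain ⟨y, hyi, hyj⟩ := hi
    exact Set.disjoint_left.1 (hΔd hjj') hyj (subset_of_inter_nonempty hΓd href hi' hyi)
  · obtain ⟨y, hy⟩ := Set.nonempty_iff_ne_empty.2 fun h : Γ i = ∅ => hi (by rw [h, h0])
    obtain ⟨j, hj⟩ := Set.mem_iUnion.1 (hΔU ▸ hΓU ▸ Set.mem_iUnion.2 ⟨i, hy⟩ : y ∈ ⋃ j, Δ j)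
    exact ⟨j, by simpa using ⟨y, hy, hj⟩⟩

/-- If `Γ` and `Δ` are countable partitions of an open set `U` into pairwise disjoint
compact open sets (padded with `∅`), `Γ` refines `Δ`, and `μ` is a finitely additive
real-valued set function on compact open sets with `μ ∅ = 0`, then unconditional
convergence of `Σ_{A∈Γ} μ(A)` to `x ∈ [-∞,∞]` implies the same for `Σ_{B∈Δ} μ(B)`. -/
theorem stmt_11 (Y : Type*) [TopologicalSpace Y] [T2Space Y]
    (μ : Set Y → ℝ) (h0 : μ ∅ = 0)
    (hadd : ∀ A B : Set Y, IsCompact A → IsOpen A → IsCompact B → IsOpen B →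
      Disjoint A B → μ (A ∪ B) = μ A + μ B)
    (U : Set Y) (hU : IsOpen U)
    (Γ Δ : ℕ → Set Y)
    (hΓco : ∀ i, IsCompact (Γ i) ∧ IsOpen (Γ i))
    (hΔco : ∀ j, IsCompact (Δ j) ∧ IsOpen (Δ j))
    (hΓd : Pairwise (Function.onFun Disjoint Γ))
    (hΔd : Pairwise (Function.onFun Disjoint Δ))
    (hΓU : (⋃ i, Γ i) = U) (hΔU : (⋃ j, Δ j) = U)
    (href : ∀ j, Δ j = ⋃ i ∈ {i : ℕ | Γ i ⊆ Δ j}, Γ i)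
    (x : EReal) (hx : UncondSumRE (fun i => μ (Γ i)) x) :
    UncondSumRE (fun j => μ (Δ j)) x :=
  stmt_11_general Y μ h0 hadd U Γ Δ hΓco hΔco hΓd hΔd hΓU hΔU href x hx
end
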